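/- Let w ∈ S_n and suppose the letter i is unconfined in some reduced word of w. Then in every reduced word of w the letter i appears exactly once, and i is unconfined in every reduced word of w. -/

import Mathlib

/-- The adjacent transposition `σ_i`, swapping `i` and `i+1` (acting on `ℕ`). -/
def sigmaT (i : ℕ) : Equiv.Perm ℕ := Equiv.swap i (i + 1)

/-- The permutation given by a word (product of simple reflections, composed as functions). -/
def wordProd (s : List ℕ) : Equiv.Perm ℕ := (s.map sigmaT).prod

/-- `s` is a word for `w` in `S_n`: all letters lie in `{1,…,n-1}` and the product is `w`. -/
def IsWord (n : ℕ) (w : Equiv.Perm ℕ) (s : List ℕ) : Prop :=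
  (∀ j ∈ s, 1 ≤ j ∧ j ≤ n - 1) ∧ wordProd s = w

/-- `s` is a reduced word for `w`: a word of minimal length. -/
def IsReducedWord (n : ℕ) (w : Equiv.Perm ℕ) (s : List ℕ) : Prop :=
  IsWord n w s ∧ ∀ t : List ℕ, IsWord n w t → s.length ≤ t.length

/-- The Coxeter length `ℓ(w)`. -/
noncomputable def ell (n : ℕ) (w : Equiv.Perm ℕ) : ℕ :=
  sInf {k | ∃ s : List ℕ, IsWord n w s ∧ s.length = k}

/-- The support of `w`: letters appearing in reduced words of `w`. -/
def supp (n : ℕ) (w : Equiv.Perm ℕ) : Set ℕ :=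
  {i | ∃ s : List ℕ, IsReducedWord n w s ∧ i ∈ s}

/-- Bruhat order: some reduced word of `v` is a subsequence of some reduced word of `w`. -/
def BruhatLE (n : ℕ) (v w : Equiv.Perm ℕ) : Prop :=
  ∃ s t : List ℕ, IsReducedWord n v s ∧ IsReducedWord n w t ∧ s.Sublist t

/-- The principal order ideal `B(w)`, as a type. -/
def IdealB (n : ℕ) (w : Equiv.Perm ℕ) : Type := {v : Equiv.Perm ℕ // BruhatLE n v w}

/-- The Bruhat order restricted to `B(w)`. -/
def IdealLE (n : ℕ) (w : Equiv.Perm ℕ) (a b : IdealB n w) : Prop := BruhatLE n a.1 b.1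

/-- Two relations are isomorphic (order isomorphism of the corresponding ordered sets). -/
def RelIsomorphic {α β : Type*} (ra : α → α → Prop) (rb : β → β → Prop) : Prop :=
  ∃ e : α ≃ β, ∀ a b : α, ra a b ↔ rb (e a) (e b)

/-- `w` is a prism: `B(w) ≅ C₂ × X` for some partially ordered set `X`
(the two-element chain `C₂` realized as `Bool`), with the componentwise order. -/
def IsPrism (n : ℕ) (w : Equiv.Perm ℕ) : Prop :=
  ∃ (X : Type) (rX : X → X → Prop), IsPartialOrder X rX ∧
    RelIsomorphic (IdealLE n w)
      (fun p q : Bool × X => (p.1 ≤ q.1) ∧ rX p.2 q.2)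

/-- `w` belongs to `S_n`: it fixes every point outside `{1,…,n}`. -/
def MemSymm (n : ℕ) (w : Equiv.Perm ℕ) : Prop :=
  ∀ x : ℕ, x ∉ Set.Icc 1 n → w x = x

/-- `i` is unconfined in the word `s`: it appears exactly once, not between two copies
of `i+1` and not between two copies of `i-1`. -/
def Unconfined (i : ℕ) (s : List ℕ) : Prop :=
  s.count i = 1 ∧ ∀ a b : List ℕ, s = a ++ i :: b →
    ¬((i + 1) ∈ a ∧ (i + 1) ∈ b) ∧ ¬((i - 1) ∈ a ∧ (i - 1) ∈ b)

/-- `B(w) ≅ C₂ × B(v)` with the componentwise order. -/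
def IsoC2TimesIdeal (n : ℕ) (w v : Equiv.Perm ℕ) : Prop :=
  RelIsomorphic (IdealLE n w)
    (fun p q : Bool × IdealB n v => (p.1 ≤ q.1) ∧ IdealLE n v p.2 q.2)

/-!
Read a word from right to left as a wiring diagram in which the letter `j` exchanges the wires
at positions `j` and `j + 1`. Comparing lengths with inversion counts shows that in a reduced
word every letter creates an inversion of `w` that is never undone.

If `s = a ++ i :: b` with `i` in neither `a` nor `b`, then `w` sends exactly one point `p ≤ i`
above `i` and exactly one point `q > i` to `≤ i`, and a wire without inversions is never
touched; this turns "`i` is unconfined in `s`" into a condition on `w` alone: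
`(w p = i + 1 ∨ q = i + 1) ∧ (w q = i ∨ p = i)`. Conversely, this condition forces `i` to
occur exactly once in every reduced word. The sum of the labels of the wires at positions
`≤ i` grows by at least one at each letter `i`, so `i` occurs at most `q - p` times, and at
most `w p - w q` times after reversing the word; in the remaining case `w i = i + 1` the wire
`i` meets no wire but `q`.
-/

open Equiv Finset

lemma List.notMem_of_count_append_cons_eq_one {α : Type*} [BEq α] [LawfulBEq α] {x : α}
    {l₁ l₂ : List α} (h : (l₁ ++ x :: l₂).count x = 1) : x ∉ l₁ ∧ x ∉ l₂ := by
  simp only [List.count_append, List.count_cons_self] at h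
  exact ⟨List.count_eq_zero.1 (by omega), List.count_eq_zero.1 (by omega)⟩

section SimpleTranspositions

variable {i j x y z : ℕ} {s t : List ℕ}

lemma sigmaT_apply (j x : ℕ) :
    sigmaT j x = if x = j then j + 1 else if x = j + 1 then j else x :=
  swap_apply_def _ _ _

@[simp] lemma sigmaT_apply_self (j : ℕ) : sigmaT j j = j + 1 := swap_apply_left _ _

@[simp] lemma sigmaT_apply_succ (j : ℕ) : sigmaT j (j + 1) = j := swap_apply_right _ _

lemma sigmaT_apply_of_ne (h₁ : x ≠ j) (h₂ : x ≠ j + 1) : sigmaT j x = x :=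
  swap_apply_of_ne_of_ne h₁ h₂

@[simp] lemma sigmaT_mul_self (j : ℕ) : sigmaT j * sigmaT j = 1 := swap_mul_self _ _

@[simp] lemma sigmaT_inv (j : ℕ) : (sigmaT j)⁻¹ = sigmaT j := swap_inv _ _

lemma sigmaT_lt_sigmaT (hxy : x < y) (h : ¬(x = j ∧ y = j + 1)) : sigmaT j x < sigmaT j y := by
  rw [sigmaT_apply, sigmaT_apply]
  split_ifs <;> omega

lemma sigmaT_le_iff (hj : j ≠ i) (x : ℕ) : sigmaT j x ≤ i ↔ x ≤ i := by
  rw [sigmaT_apply]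
  split_ifs <;> omega

@[simp] lemma wordProd_nil : wordProd [] = 1 := rfl

@[simp] lemma wordProd_cons (j : ℕ) (t : List ℕ) :
    wordProd (j :: t) = sigmaT j * wordProd t := by
  simp [wordProd]

@[simp] lemma wordProd_append (s t : List ℕ) : wordProd (s ++ t) = wordProd s * wordProd t := by
  simp [wordProd]

lemma wordProd_reverse (s : List ℕ) : wordProd s.reverse = (wordProd s)⁻¹ := by
  induction s with
  | nil => simp
  | cons j t ih => simp [ih]

lemma wordProd_apply_of_forall_ne (h : ∀ j ∈ t, j ≠ z ∧ j + 1 ≠ z) :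
    wordProd t z = z := by
  induction t with
  | nil => rfl
  | cons j t ih =>
    rw [List.forall_mem_cons] at h
    rw [wordProd_cons, Perm.mul_apply, ih h.2]
    exact sigmaT_apply_of_ne (Ne.symm h.1.1) (Ne.symm h.1.2)

lemma wordProd_le_iff (h : i ∉ t) (x : ℕ) : wordProd t x ≤ i ↔ x ≤ i := by
  induction t generalizing x with
  | nil => rfl
  | cons j t ih =>
    rw [List.mem_cons, not_or] at h
    rw [wordProd_cons, Perm.mul_apply, sigmaT_le_iff (Ne.symm h.1), ih h.2]

end SimpleTranspositions

section Inversions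

variable {n j : ℕ} {v : Perm ℕ}

lemma memSymm_sigmaT (hj : 1 ≤ j ∧ j ≤ n - 1) : MemSymm n (sigmaT j) := fun x hx => by
  rw [Set.mem_Icc] at hx
  exact sigmaT_apply_of_ne (by omega) (by omega)

lemma MemSymm.mul {v' : Perm ℕ} (hv : MemSymm n v) (hv' : MemSymm n v') : MemSymm n (v * v') :=
  fun x hx => by rw [Perm.mul_apply, hv' x hx, hv x hx]

lemma MemSymm.inv (hv : MemSymm n v) : MemSymm n v⁻¹ := fun x hx => by
  rw [Perm.inv_eq_iff_eq, hv x hx]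

lemma memSymm_wordProd {s : List ℕ} (hs : ∀ j ∈ s, 1 ≤ j ∧ j ≤ n - 1) :
    MemSymm n (wordProd s) := by
  induction s with
  | nil => exact fun _ _ => rfl
  | cons j t ih =>
    rw [List.forall_mem_cons] at hs
    exact (memSymm_sigmaT hs.1).mul (ih hs.2)

lemma MemSymm.apply_mem (hv : MemSymm n v) {x : ℕ} (hx : x ∈ Set.Icc 1 n) :
    v x ∈ Set.Icc 1 n := by
  by_contra h
  rw [v.injective (hv _ h)] at h
  exact h hx

def inversions (n : ℕ) (v : Perm ℕ) : Finset (ℕ × ℕ) :=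
  (Icc 1 n ×ˢ Icc 1 n).filter fun p => p.1 < p.2 ∧ v p.2 < v p.1

lemma card_inversions_one (n : ℕ) : #(inversions n 1) = 0 :=
  card_eq_zero.2 (filter_eq_empty_iff.2 fun _ _ h => by simp at h; omega)

lemma MemSymm.mem_inversions (hv : MemSymm n v) {x y : ℕ} :
    (x, y) ∈ inversions n v ↔ x < y ∧ v y < v x := by
  simp only [inversions, mem_filter, mem_product, Finset.mem_Icc]
  refine ⟨fun h => h.2, fun h => ⟨?_, h⟩⟩
  have hx : x ∈ Set.Icc 1 n := by
    by_contra hx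
    have hvx := hv x hx
    rw [Set.mem_Icc] at hx
    rcases Nat.eq_zero_or_pos x with rfl | hx0
    · omega
    · have := hv y (by rw [Set.mem_Icc]; omega)
      omega
  have hy : y ∈ Set.Icc 1 n := by
    by_contra hy
    have hvy := hv y hy
    have := hv.apply_mem hx
    rw [Set.mem_Icc] at hx hy this
    omega
  exact ⟨hx, hy⟩

lemma inversions_sigmaT_mul (hj : 1 ≤ j ∧ j ≤ n - 1) (hv : MemSymm n v)
    (h : v⁻¹ j < v⁻¹ (j + 1)) :
    inversions n (sigmaT j * v) = insert (v⁻¹ j, v⁻¹ (j + 1)) (inversions n v) := by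
  ext ⟨x, y⟩
  rw [mem_insert, ((memSymm_sigmaT hj).mul hv).mem_inversions, hv.mem_inversions, Prod.mk.injEq,
    Perm.eq_inv_iff_eq, Perm.eq_inv_iff_eq, Perm.mul_apply, Perm.mul_apply]
  constructor
  · rintro ⟨hxy, hσ⟩
    rcases lt_trichotomy (v x) (v y) with hlt | heq | hgt
    · exact .inl (not_not.1 fun hne => (sigmaT_lt_sigmaT hlt hne).not_gt hσ)
    · exact absurd hσ (by rw [heq]; exact lt_irrefl _)
    · exact .inr ⟨hxy, hgt⟩
  · rintro (⟨hx, hy⟩ | ⟨hxy, hgt⟩)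
    · rw [← Perm.eq_inv_iff_eq] at hx hy
      subst hx hy
      simpa using h
    · refine ⟨hxy, sigmaT_lt_sigmaT hgt fun ⟨hy, hx⟩ => h.not_gt ?_⟩
      rwa [← Perm.eq_inv_iff_eq.2 hy, ← Perm.eq_inv_iff_eq.2 hx]

lemma card_inversions_sigmaT_mul_of_lt (hj : 1 ≤ j ∧ j ≤ n - 1) (hv : MemSymm n v)
    (h : v⁻¹ j < v⁻¹ (j + 1)) :
    #(inversions n (sigmaT j * v)) = #(inversions n v) + 1 := by
  rw [inversions_sigmaT_mul hj hv h, card_insert_of_notMem]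
  simp [hv.mem_inversions]

lemma card_inversions_sigmaT_mul_of_gt (hj : 1 ≤ j ∧ j ≤ n - 1) (hv : MemSymm n v)
    (h : v⁻¹ (j + 1) < v⁻¹ j) :
    #(inversions n (sigmaT j * v)) + 1 = #(inversions n v) := by
  have key := card_inversions_sigmaT_mul_of_lt hj ((memSymm_sigmaT hj).mul hv)
    (by simpa [Perm.mul_apply] using h)
  rwa [← mul_assoc, sigmaT_mul_self, one_mul, eq_comm] at key

lemma card_inversions_wordProd_le {s : List ℕ} (hs : ∀ j ∈ s, 1 ≤ j ∧ j ≤ n - 1) :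
    #(inversions n (wordProd s)) ≤ s.length := by
  induction s with
  | nil => simp [card_inversions_one]
  | cons j t ih =>
    rw [List.forall_mem_cons] at hs
    have hv := memSymm_wordProd hs.2
    have ih := ih hs.2
    rw [wordProd_cons, List.length_cons]
    rcases lt_or_gt_of_ne ((wordProd t)⁻¹.injective.ne (Nat.succ_ne_self j).symm) with h | h
    · have := card_inversions_sigmaT_mul_of_lt hs.1 hv h
      omega
    · have := card_inversions_sigmaT_mul_of_gt hs.1 hv h
      omega

lemma MemSymm.exists_descent (hv : MemSymm n v) (hne : v ≠ 1) :
    ∃ j, (1 ≤ j ∧ j ≤ n - 1) ∧ v (j + 1) < v j := by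
  by_contra! hmono
  have hlt : ∀ j, 1 ≤ j → j + 1 ≤ n → v j < v (j + 1) := fun j hj hjn =>
    (hmono j ⟨hj, by omega⟩).lt_of_ne fun h => by have := v.injective h; omega
  have hup : ∀ k, 1 ≤ k → k ≤ n → k ≤ v k := by
    intro k hk hkn
    induction k, hk using Nat.le_induction with
    | base => exact (hv.apply_mem ⟨le_rfl, hkn⟩).1
    | succ k hk ih =>
      have := hlt k hk hkn
      have := ih (by omega)
      omega
  have hdown : ∀ d k, k + d = n → 1 ≤ k → v k ≤ k := by
    intro d
    induction d with
    | zero => exact fun k hk hk1 => (hv.apply_mem ⟨hk1, by omega⟩).2.trans (by omega)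
    | succ d ih =>
      intro k hk hk1
      have := ih (k + 1) (by omega) (by omega)
      have := hlt k hk1 (by omega)
      omega
  refine hne (Perm.ext fun x => ?_)
  by_cases hx : x ∈ Set.Icc 1 n
  · obtain ⟨hx1, hxn⟩ := hx
    have := hup x hx1 hxn
    have := hdown (n - x) x (by omega) hx1
    rw [Perm.one_apply]
    omega
  · exact hv x hx

lemma MemSymm.exists_isWord_length_eq (hv : MemSymm n v) :
    ∃ s, IsWord n v s ∧ s.length = #(inversions n v) := by
  induction hk : #(inversions n v) using Nat.strong_induction_on generalizing v with
  | _ k ih =>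
    obtain rfl | hne := eq_or_ne v 1
    · exact ⟨[], ⟨by simp, rfl⟩, by rw [← hk, card_inversions_one, List.length_nil]⟩
    obtain ⟨j, hj, hdesc⟩ := hv.inv.exists_descent (inv_ne_one.2 hne)
    have hcard := card_inversions_sigmaT_mul_of_gt hj hv hdesc
    obtain ⟨t, ⟨ht, hprod⟩, hlen⟩ :=
      ih _ (by omega) ((memSymm_sigmaT hj).mul hv) rfl
    refine ⟨j :: t, ⟨List.forall_mem_cons.2 ⟨hj, ht⟩, ?_⟩, by simp [hlen]; omega⟩
    rw [wordProd_cons, hprod, ← mul_assoc, sigmaT_mul_self, one_mul]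

end Inversions

namespace IsReducedWord

variable {n i j : ℕ} {w : Perm ℕ} {s t a b : List ℕ}

lemma length_eq (hs : IsReducedWord n w s) : s.length = #(inversions n w) := by
  obtain ⟨t, ht, hlen⟩ := (hs.1.2 ▸ memSymm_wordProd hs.1.1).exists_isWord_length_eq
  exact le_antisymm (hlen ▸ hs.2 t ht) (hs.1.2 ▸ card_inversions_wordProd_le hs.1.1)

lemma of_append_right (hs : IsReducedWord n w (a ++ t)) : IsReducedWord n (wordProd t) t := by
  refine ⟨⟨fun j hj => hs.1.1 j (List.mem_append_right a hj), rfl⟩, fun t' ht' => ?_⟩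
  have hw : IsWord n w (a ++ t') := by
    refine ⟨fun j hj => ?_, by rw [wordProd_append, ht'.2, ← wordProd_append, hs.1.2]⟩
    rcases List.mem_append.1 hj with hj | hj
    · exact hs.1.1 j (List.mem_append_left t hj)
    · exact ht'.1 j hj
  simpa using hs.2 _ hw

lemma reverse (hs : IsReducedWord n w s) : IsReducedWord n w⁻¹ s.reverse := by
  refine ⟨⟨fun j hj => hs.1.1 j (List.mem_reverse.1 hj), by rw [wordProd_reverse, hs.1.2]⟩,
    fun t ht => ?_⟩
  have hw : IsWord n w t.reverse :=
    ⟨fun j hj => ht.1 j (List.mem_reverse.1 hj), by rw [wordProd_reverse, ht.2, inv_inv]⟩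
  simpa using hs.2 _ hw

lemma of_append_left (hs : IsReducedWord n w (a ++ t)) : IsReducedWord n (wordProd a) a := by
  have h := hs.reverse
  rw [List.reverse_append] at h
  simpa [wordProd_reverse] using h.of_append_right.reverse

lemma inv_lt_inv (hs : IsReducedWord n w (j :: t)) :
    (wordProd t)⁻¹ j < (wordProd t)⁻¹ (j + 1) := by
  have ht : IsReducedWord n (wordProd t) t := of_append_right (a := [j]) hs
  have hj := hs.1.1 j List.mem_cons_self
  rcases lt_or_gt_of_ne ((wordProd t)⁻¹.injective.ne (Nat.succ_ne_self j).symm) with h | h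
  · exact h
  · have hcard := card_inversions_sigmaT_mul_of_gt hj (memSymm_wordProd ht.1.1) h
    have hlen := hs.length_eq
    have := ht.length_eq
    rw [← hs.1.2, wordProd_cons, List.length_cons] at hlen
    omega

lemma apply_lt_apply_of_suffix (hs : IsReducedWord n w (a ++ t)) {x y : ℕ} (hxy : x < y)
    (h : wordProd t y < wordProd t x) : w y < w x := by
  induction a generalizing w with
  | nil => simpa [← hs.1.2] using h
  | cons j a ih =>
    have hlt := inv_lt_inv (t := a ++ t) hs
    have h' := ih (of_append_right (a := [j]) hs)
    rw [← hs.1.2, List.cons_append, wordProd_cons, Perm.mul_apply, Perm.mul_apply]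
    refine sigmaT_lt_sigmaT h' fun ⟨hy, hx⟩ => hxy.not_gt ?_
    rwa [← Perm.eq_inv_iff_eq.2 hy, ← Perm.eq_inv_iff_eq.2 hx] at hlt

lemma lt_and_apply_lt (hs : IsReducedWord n w (a ++ j :: t)) {x y : ℕ}
    (hx : wordProd t x = j) (hy : wordProd t y = j + 1) : x < y ∧ w y < w x := by
  have hxy : x < y := by
    have := (of_append_right hs).inv_lt_inv
    rwa [← Perm.eq_inv_iff_eq.2 hx, ← Perm.eq_inv_iff_eq.2 hy] at this
  exact ⟨hxy, hs.apply_lt_apply_of_suffix hxy (by simp [Perm.mul_apply, hx, hy])⟩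

lemma forall_ne_of_no_inversion (hs : IsReducedWord n w s) {z : ℕ}
    (hlow : ∀ x < z, w x < w z) (hhigh : ∀ y, z < y → w z < w y) :
    ∀ j ∈ s, j ≠ z ∧ j + 1 ≠ z := by
  induction s generalizing w with
  | nil => simp
  | cons j t ih =>
    have ht : IsReducedWord n (wordProd t) t := of_append_right (a := [j]) hs
    have hpersist {x y : ℕ} (hxy : x < y) (h : wordProd t y < wordProd t x) : w y < w x :=
      apply_lt_apply_of_suffix (a := [j]) hs hxy h
    have ht_ne := ih ht
      (fun x hx => (not_lt.1 fun h => (hlow x hx).not_gt (hpersist hx h)).lt_of_ne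
        fun h => hx.ne ((wordProd t).injective h))
      (fun y hy => (not_lt.1 fun h => (hhigh y hy).not_gt (hpersist hy h)).lt_of_ne
        fun h => hy.ne ((wordProd t).injective h))
    have hz : wordProd t z = z := wordProd_apply_of_forall_ne ht_ne
    refine List.forall_mem_cons.2 ⟨⟨fun hjz => ?_, fun hjz => ?_⟩, ht_ne⟩
    · obtain ⟨hzy, hinv⟩ := lt_and_apply_lt (a := []) hs (hz.trans hjz.symm)
        (y := (wordProd t)⁻¹ (j + 1)) (by simp)
      exact (hhigh _ hzy).not_gt hinv
    · obtain ⟨hxz, hinv⟩ := lt_and_apply_lt (a := []) hs (x := (wordProd t)⁻¹ j) (by simp)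
        (hz.trans hjz.symm)
      exact (hlow _ hxz).not_gt hinv

lemma succ_mem_iff (ht : IsReducedWord n (wordProd t) t) (hi : i ∉ t) :
    i + 1 ∈ t ↔ wordProd t (i + 1) ≠ i + 1 := by
  have hle := wordProd_le_iff hi
  refine ⟨fun hmem hfix => ?_, fun hfix => not_not.1 fun hmem => hfix ?_⟩
  · refine (ht.forall_ne_of_no_inversion (fun x hx => ?_) (fun y hy => ?_) _ hmem).1 rfl
    · have := (hle x).2 (by omega)
      omega
    · have h₁ := (hle y).not.2 (by omega)
      have h₂ : wordProd t y ≠ i + 1 := fun h =>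
        hy.ne' ((wordProd t).injective (h.trans hfix.symm))
      omega
  · exact wordProd_apply_of_forall_ne fun j hj =>
      ⟨fun h => hmem (h ▸ hj), fun h => hi (Nat.succ_injective h ▸ hj)⟩

lemma sub_one_mem_iff (ht : IsReducedWord n (wordProd t) t) (hi₁ : 1 ≤ i) (hi : i ∉ t) :
    i - 1 ∈ t ↔ wordProd t i ≠ i := by
  have hle := wordProd_le_iff hi
  refine ⟨fun hmem hfix => ?_, fun hfix => not_not.1 fun hmem => hfix ?_⟩
  · refine (ht.forall_ne_of_no_inversion (z := i) (fun x hx => ?_) (fun y hy => ?_) _ hmem).2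
      (by omega)
    · have h₁ := (hle x).2 hx.le
      have h₂ : wordProd t x ≠ i := fun h => hx.ne ((wordProd t).injective (h.trans hfix.symm))
      omega
    · have := (hle y).not.2 (by omega)
      omega
  · exact wordProd_apply_of_forall_ne fun j hj =>
      ⟨fun h => hi (h ▸ hj), fun h => hmem ((by omega : j = i - 1) ▸ hj)⟩

end IsReducedWord

def SingleCrossing (i : ℕ) (w : Perm ℕ) (p q : ℕ) : Prop :=
  (∀ x, x ≤ i ∧ i < w x ↔ x = p) ∧ (∀ y, i < y ∧ w y ≤ i ↔ y = q)

def AdjacentCrossing (i : ℕ) (w : Perm ℕ) (p q : ℕ) : Prop :=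
  (w p = i + 1 ∨ q = i + 1) ∧ (w q = i ∨ p = i)

section Crossing

variable {n i : ℕ} {w : Perm ℕ} {p q p' q' : ℕ} {s a b : List ℕ}

lemma singleCrossing_of_wordProd_eq (hw : wordProd (a ++ i :: b) = w) (ha : i ∉ a)
    (hb : i ∉ b) :
    SingleCrossing i w ((wordProd b)⁻¹ i) ((wordProd b)⁻¹ (i + 1)) := by
  have hwx (x : ℕ) : w x = wordProd a (sigmaT i (wordProd b x)) := by
    simp [← hw, Perm.mul_apply]
  constructor <;> intro x
  · rw [hwx, Perm.eq_inv_iff_eq, ← wordProd_le_iff hb x, ← not_le, wordProd_le_iff ha,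
      sigmaT_apply]
    split_ifs <;> omega
  · rw [hwx, Perm.eq_inv_iff_eq, ← not_le, ← wordProd_le_iff hb x, wordProd_le_iff ha,
      sigmaT_apply]
    split_ifs <;> omega

lemma SingleCrossing.inv (h : SingleCrossing i w p q) : SingleCrossing i w⁻¹ (w q) (w p) := by
  constructor <;> intro x <;> obtain ⟨x, rfl⟩ := w.surjective x <;>
    simp only [Perm.coe_inv, symm_apply_apply, EmbeddingLike.apply_eq_iff_eq]
  · rw [and_comm, h.2]
  · rw [and_comm, h.1]

lemma SingleCrossing.unique (h : SingleCrossing i w p q) (h' : SingleCrossing i w p' q') :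
    p' = p ∧ q' = q :=
  ⟨(h.1 p').1 ((h'.1 p').2 rfl), (h.2 q').1 ((h'.2 q').2 rfl)⟩

lemma IsReducedWord.not_confined_iff (hs : IsReducedWord n w (a ++ i :: b)) (ha : i ∉ a)
    (hb : i ∉ b) :
    (¬(i + 1 ∈ a ∧ i + 1 ∈ b) ∧ ¬(i - 1 ∈ a ∧ i - 1 ∈ b)) ↔
      AdjacentCrossing i w ((wordProd b)⁻¹ i) ((wordProd b)⁻¹ (i + 1)) := by
  have hi : 1 ≤ i := (hs.1.1 i (by simp)).1
  have hA := hs.of_append_left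
  have hB := (show a ++ i :: b = (a ++ [i]) ++ b by simp) ▸ hs |>.of_append_right
  have hwp : w ((wordProd b)⁻¹ i) = wordProd a (i + 1) := by simp [← hs.1.2, Perm.mul_apply]
  have hwq : w ((wordProd b)⁻¹ (i + 1)) = wordProd a i := by simp [← hs.1.2, Perm.mul_apply]
  rw [AdjacentCrossing, hwp, hwq, Perm.inv_eq_iff_eq, Perm.inv_eq_iff_eq,
    hA.succ_mem_iff ha, hB.succ_mem_iff hb, hA.sub_one_mem_iff hi ha, hB.sub_one_mem_iff hi hb]
  grind

lemma SingleCrossing.mem_of_wordProd_eq (h : SingleCrossing i w p q) (hs : wordProd s = w) :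
    i ∈ s := by
  by_contra hi
  have hp := (h.1 p).2 rfl
  have := (wordProd_le_iff hi p).2 hp.1
  rw [hs] at this
  omega

lemma SingleCrossing.sum_inv_add (h : SingleCrossing i w p q) :
    ∑ v ∈ range (i + 1), w⁻¹ v + p = ∑ v ∈ range (i + 1), v + q := by
  have hp : p ∈ range (i + 1) := mem_range.2 (Nat.lt_succ_of_le ((h.1 p).2 rfl).1)
  have hq : q ∉ (range (i + 1)).erase p := fun hq => by
    have := ((h.2 q).2 rfl).1
    rw [mem_erase, mem_range] at hq
    omega
  have hsum :
      ∑ v ∈ range (i + 1), w⁻¹ v = ∑ x ∈ insert q ((range (i + 1)).erase p), x := by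
    refine sum_equiv w⁻¹ (fun v => ?_) (fun _ _ => rfl)
    obtain ⟨x, rfl⟩ := w.surjective v
    have h₁ := h.1 x
    have h₂ := h.2 x
    simp only [mem_range, mem_insert, mem_erase, Perm.coe_inv, symm_apply_apply]
    omega
  rw [hsum, sum_insert hq, add_assoc, sum_erase_add _ _ hp, add_comm]

end Crossing

namespace IsReducedWord

variable {n i : ℕ} {w : Perm ℕ} {p q : ℕ} {s : List ℕ}

lemma count_add_sum_le (hs : IsReducedWord n w s) (i : ℕ) :
    s.count i + ∑ v ∈ range (i + 1), v ≤ ∑ v ∈ range (i + 1), w⁻¹ v := by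
  induction s generalizing w with
  | nil => simp [← hs.1.2]
  | cons j t ih =>
    have ht := ih (of_append_right (a := [j]) hs)
    have hinv (v : ℕ) : w⁻¹ v = (wordProd t)⁻¹ (sigmaT j v) := by
      simp [← hs.1.2, Perm.mul_apply]
    simp only [hinv]
    rcases eq_or_ne j i with rfl | hji
    · have hlt := hs.inv_lt_inv
      have hσ : ∑ v ∈ range j, (wordProd t)⁻¹ (sigmaT j v) =
          ∑ v ∈ range j, (wordProd t)⁻¹ v :=
        sum_congr rfl fun v hv => by
          rw [mem_range] at hv
          rw [sigmaT_apply_of_ne (by omega) (by omega)]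
      rw [sum_range_succ, sum_range_succ] at ht
      rw [sum_range_succ, sum_range_succ, hσ, sigmaT_apply_self, List.count_cons_self]
      omega
    · have hσ : ∑ v ∈ range (i + 1), (wordProd t)⁻¹ (sigmaT j v) =
          ∑ v ∈ range (i + 1), (wordProd t)⁻¹ v :=
        sum_equiv (sigmaT j) (fun v => by simp only [mem_range, Nat.lt_succ_iff, sigmaT_le_iff hji])
          (fun _ _ => rfl)
      rwa [hσ, List.count_cons_of_ne hji]

lemma count_add_le (hs : IsReducedWord n w s) (h : SingleCrossing i w p q) :
    s.count i + p ≤ q := by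
  have := hs.count_add_sum_le i
  have := h.sum_inv_add
  omega

/-- The wire `i` meets only the wire `q`: before the first letter `i` it sits at position `i`,
afterwards at position `i + 1` with `q` below it. -/
lemma count_le_one_of_apply_eq_succ (hs : IsReducedWord n w s) (h : SingleCrossing i w i q)
    (hwi : w i = i + 1) : s.count i ≤ 1 := by
  suffices key : ∀ a t, s = a ++ t → (t.count i = 0 ∧ wordProd t i = i) ∨
      (t.count i = 1 ∧ wordProd t i = i + 1 ∧ wordProd t q ≤ i) by
    rcases key [] s rfl with ⟨-, hfix⟩ | ⟨hcount, -⟩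
    · rw [hs.1.2] at hfix
      omega
    · omega
  intro a t hst
  induction t generalizing a with
  | nil => simp
  | cons j t ih =>
    subst hst
    have hσ (x : ℕ) : wordProd (j :: t) x = sigmaT j (wordProd t x) := by simp [Perm.mul_apply]
    rcases ih (a ++ [j]) (by simp) with ⟨hcount, hfix⟩ | ⟨hcount, hup, hq⟩
    · rcases eq_or_ne j i with rfl | hji
      · obtain ⟨hy, hwy⟩ := hs.lt_and_apply_lt hfix (y := (wordProd t)⁻¹ (j + 1)) (by simp)
        have hyq := (h.2 _).1 ⟨hy, by omega⟩
        refine .inr ⟨by simp [hcount], by simp [hfix], ?_⟩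
        simp [← hyq]
      rcases eq_or_ne (j + 1) i with rfl | hji'
      · obtain ⟨hx, hwx⟩ := hs.lt_and_apply_lt (x := (wordProd t)⁻¹ j) (by simp) hfix
        have := (h.1 _).1 ⟨hx.le, by omega⟩
        omega
      · refine .inl ⟨by simp [hcount, hji], ?_⟩
        rw [hσ, hfix, sigmaT_apply_of_ne (Ne.symm hji) (Ne.symm hji')]
    · rcases eq_or_ne j i with rfl | hji
      · obtain ⟨hx, hwx⟩ := hs.lt_and_apply_lt (x := (wordProd t)⁻¹ j) (by simp) hup
        have := (h.1 _).1 ⟨hx.le, by omega⟩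
        omega
      rcases eq_or_ne j (i + 1) with rfl | hji'
      · obtain ⟨hy, hwy⟩ :=
          hs.lt_and_apply_lt hup (y := (wordProd t)⁻¹ (i + 1 + 1)) (by simp)
        have hyq := (h.2 _).1 ⟨hy, by omega⟩
        simp [← hyq] at hq
      · refine .inr ⟨by simp [hcount, hji], ?_, ?_⟩
        · rw [hσ, hup, sigmaT_apply_of_ne (by omega) (by omega)]
        · rwa [hσ, sigmaT_le_iff hji]

lemma count_eq_one (hs : IsReducedWord n w s) (h : SingleCrossing i w p q)
    (hadj : AdjacentCrossing i w p q) : s.count i = 1 := by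
  have hpos : 0 < s.count i := List.count_pos_iff.2 (h.mem_of_wordProd_eq hs.1.2)
  suffices s.count i ≤ 1 by omega
  obtain ⟨hwp | hq, hwq | hp⟩ := hadj
  · have := hs.reverse.count_add_le h.inv
    rw [List.count_reverse] at this
    omega
  · subst hp
    exact hs.count_le_one_of_apply_eq_succ h hwp
  · have hinv : w⁻¹ i = i + 1 := by rw [Perm.inv_eq_iff_eq, ← hq, hwq]
    have := hs.reverse.count_le_one_of_apply_eq_succ (hwq ▸ h.inv) hinv
    rwa [List.count_reverse] at this
  · have := hs.count_add_le h
    omega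

end IsReducedWord

theorem unconfined_everywhere_general (n : ℕ) (w : Equiv.Perm ℕ) (i : ℕ)
    (h : ∃ s : List ℕ, IsReducedWord n w s ∧ Unconfined i s) :
    ∀ s : List ℕ, IsReducedWord n w s → Unconfined i s := by
  obtain ⟨s₀, hs₀, hcount₀, hfree₀⟩ := h
  obtain ⟨a₀, b₀, rfl⟩ :=
    List.append_of_mem (List.count_pos_iff.1 (by omega : 0 < s₀.count i))
  obtain ⟨ha₀, hb₀⟩ := List.notMem_of_count_append_cons_eq_one hcount₀
  have hcross := singleCrossing_of_wordProd_eq hs₀.1.2 ha₀ hb₀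
  have hadj := (hs₀.not_confined_iff ha₀ hb₀).1 (hfree₀ a₀ b₀ rfl)
  intro s hs
  have hcount := hs.count_eq_one hcross hadj
  refine ⟨hcount, fun a b hab => ?_⟩
  subst hab
  obtain ⟨ha, hb⟩ := List.notMem_of_count_append_cons_eq_one hcount
  obtain ⟨hp, hq⟩ := hcross.unique (singleCrossing_of_wordProd_eq hs.1.2 ha hb)
  exact (hs.not_confined_iff ha hb).2 (hp ▸ hq ▸ hadj)

/-- if i is unconfined in some reduced word of w, then i appears exactly once
in every reduced word of w and is unconfined in every reduced word of w. -/
theorem unconfined_everywhere (n : ℕ) (w : Equiv.Perm ℕ) (hw : MemSymm n w) (i : ℕ)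
    (h : ∃ s : List ℕ, IsReducedWord n w s ∧ Unconfined i s) :
    ∀ s : List ℕ, IsReducedWord n w s → Unconfined i s :=
  unconfined_everywhere_general n w i h
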